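/- Let S_1, ..., S_{N+1} be i.i.d. real-valued random variables whose common distribution is atomless (so that almost surely all S_i are pairwise distinct), and let α ∈ (0,1). Let k = ⌈(1−α)(N+1)⌉ and let Q be the k-th smallest value among S_1, ..., S_N when k ≤ N, and Q = +∞ otherwise. Then P[ S_{N+1} ≤ Q ] ≤ 1 − α + 1/(N+1). -/

import Mathlib

/-!
The event `S_{N+1} ≤ Q` says exactly that fewer than `k` of the scores lie strictly below
`S_{N+1}`, i.e. that the rank of `S_{N+1}` among all `N + 1` scores is `< k`. The joint law of the
scores is a product measure, hence invariant under permutations of the coordinates, so every index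
is equally likely to have rank `< k`. The scores are almost surely distinct, so then exactly `k`
indices have rank `< k`; hence the probability is `k / (N + 1)`, and `k < (1 - α)(N + 1) + 1`.
-/

open MeasureTheory

/-- The `k`-th smallest value (1-indexed) among `f 0, …, f (n-1)`. -/
noncomputable def kthSmallest {n : ℕ} (f : Fin n → ℝ) (k : ℕ) (hk : 1 ≤ k) (hkn : k ≤ n) : ℝ :=
  f (Tuple.sort f ⟨k - 1, by omega⟩)

open Finset
open scoped ENNReal

noncomputable def strictRank {n : ℕ} (x : Fin n → ℝ) (m : Fin n) : ℕ := #{i | x i < x m}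

section Combinatorics

variable {n : ℕ}

theorem le_kthSmallest_iff (f : Fin n → ℝ) {k : ℕ} (hk : 1 ≤ k) (hkn : k ≤ n) (s : ℝ) :
    s ≤ kthSmallest f k hk hkn ↔ #{i | f i < s} < k := by
  set σ := Tuple.sort f
  have hmono : Monotone (f ∘ σ) := Tuple.monotone_sort f
  set q : Fin n := ⟨k - 1, by omega⟩
  rw [← card_equiv σ (s := {j | f (σ j) < s}) (by simp)]
  constructor
  · intro hs
    calc #{j | f (σ j) < s} ≤ #(Iio q) :=
          card_le_card fun j hj => mem_Iio.2 (hmono.reflect_lt ((mem_filter.1 hj).2.trans_le hs))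
      _ < k := by simp [q]; omega
  · intro hcard
    by_contra! hlt
    have : #(Iic q) ≤ #{j | f (σ j) < s} :=
      card_le_card fun j hj => mem_filter.2 ⟨mem_univ _, (hmono (mem_Iic.1 hj)).trans_lt hlt⟩
    simp [q] at this
    omega

theorem strictRank_comp_perm (x : Fin n → ℝ) (σ : Equiv.Perm (Fin n)) (m : Fin n) :
    strictRank (x ∘ σ) m = strictRank x (σ m) :=
  card_equiv σ (by simp)

theorem strictRank_sort {x : Fin n → ℝ} (hx : x.Injective) (j : Fin n) :
    strictRank x (Tuple.sort x j) = j := by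
  have hmono : StrictMono (x ∘ Tuple.sort x) :=
    (Tuple.monotone_sort x).strictMono_of_injective (hx.comp (Tuple.sort x).injective)
  rw [← strictRank_comp_perm, strictRank]
  simp only [hmono.lt_iff_lt]
  rw [filter_gt_eq_Iio, Fin.card_Iio]

theorem card_strictRank_lt {x : Fin n → ℝ} (hx : x.Injective) {k : ℕ} (hk : k ≤ n) :
    #{m | strictRank x m < k} = k := by
  rw [← card_equiv (Tuple.sort x) (s := {j : Fin n | (j : ℕ) < k}) (by simp [strictRank_sort hx]),
    Fin.card_filter_val_lt, min_eq_right hk]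

theorem strictRank_last (x : Fin (n + 1) → ℝ) :
    strictRank x (Fin.last n) = #{i : Fin n | x i.castSucc < x (Fin.last n)} := by
  rw [strictRank, card_filter, card_filter, Fin.sum_univ_castSucc]
  simp

theorem measurableSet_strictRank_lt (m : Fin n) (k : ℕ) :
    MeasurableSet {x : Fin n → ℝ | strictRank x m < k} := by
  have : Measurable fun x : Fin n → ℝ => strictRank x m := by
    simp only [strictRank, card_filter]
    exact Finset.measurable_sum _ fun i _ =>
      Measurable.ite (measurableSet_lt (measurable_pi_apply i) (measurable_pi_apply m))
        measurable_const measurable_const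
  exact this measurableSet_Iio

end Combinatorics

namespace ProbabilityTheory

theorem IndepFun.measure_eq_eq_zero {Ω : Type*} [MeasurableSpace Ω] {P : Measure Ω}
    [IsFiniteMeasure P] {X Y : Ω → ℝ} (hX : Measurable X) (hY : Measurable Y) (hXY : X ⟂ᵢ[P] Y)
    [NullSingletonClass (P.map Y)] : P {ω | X ω = Y ω} = 0 := by
  have hdiag : MeasurableSet {p : ℝ × ℝ | p.1 = p.2} :=
    measurableSet_eq_fun measurable_fst measurable_snd
  change P ((fun ω => (X ω, Y ω)) ⁻¹' {p | p.1 = p.2}) = 0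
  rw [← Measure.map_apply (hX.prodMk hY) hdiag,
    (indepFun_iff_map_prod_eq_prod_map_map hX.aemeasurable hY.aemeasurable).1 hXY,
    Measure.prod_apply hdiag]
  simp

theorem ae_injective_pi {ι : Type*} [Fintype ι] (μ : Measure ℝ) [IsProbabilityMeasure μ]
    [NullSingletonClass μ] : ∀ᵐ x ∂Measure.pi fun _ : ι => μ, x.Injective := by
  have hdiag : ∀ i j : ι, ∀ᵐ x ∂Measure.pi fun _ : ι => μ, i ≠ j → x i ≠ x j := by
    intro i j
    rcases eq_or_ne i j with rfl | hij
    · exact .of_forall fun _ h => absurd rfl h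
    have : NullSingletonClass ((Measure.pi fun _ : ι => μ).map (Function.eval j)) := by
      rw [(measurePreserving_eval _ j).map_eq]; infer_instance
    filter_upwards [measure_eq_zero_iff_ae_notMem.1 <|
      IndepFun.measure_eq_eq_zero (measurable_pi_apply i) (measurable_pi_apply j)
        ((iIndepFun_pi (X := fun _ => id) fun _ => aemeasurable_id).indepFun hij)] with x hx _
      using hx
  filter_upwards [ae_all_iff.2 fun i => ae_all_iff.2 (hdiag i)] with x hx i j
  exact not_imp_not.1 (hx i j)

theorem iIndepFun.map_fun_eq_pi_of_identDistrib {Ω ι β : Type*} [MeasurableSpace Ω]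
    [MeasurableSpace β] [Fintype ι] {P : Measure Ω} [IsProbabilityMeasure P] {X : ι → Ω → β}
    (hX : ∀ i, AEMeasurable (X i) P) (hind : iIndepFun X P) {i₀ : ι}
    (hident : ∀ i, IdentDistrib (X i) (X i₀) P P) :
    P.map (fun ω i => X i ω) = Measure.pi fun _ => P.map (X i₀) := by
  rw [hind.map_fun_eq_pi_map hX]
  simp_rw [(hident _).map_eq]

end ProbabilityTheory

theorem measurePreserving_comp_perm_pi {ι α : Type*} [Fintype ι] [MeasurableSpace α]
    (μ : Measure α) [SigmaFinite μ] (σ : Equiv.Perm ι) :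
    MeasurePreserving (fun x : ι → α => x ∘ σ) (Measure.pi fun _ => μ)
      (Measure.pi fun _ => μ) := by
  convert measurePreserving_piCongrLeft (fun _ : ι => μ) σ.symm using 1
  funext x j
  simp [MeasurableEquiv.coe_piCongrLeft, Equiv.piCongrLeft_apply_eq_cast]

theorem measure_strictRank_lt_of_exchangeable {n : ℕ} (ν : Measure (Fin n → ℝ))
    [IsProbabilityMeasure ν]
    (hexch : ∀ σ : Equiv.Perm (Fin n), MeasurePreserving (fun x => x ∘ σ) ν ν)
    (hinj : ∀ᵐ x ∂ν, x.Injective) {k : ℕ} (hk : k ≤ n) (m : Fin n) :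
    ν {x | strictRank x m < k} = k / n := by
  set A : Fin n → Set (Fin n → ℝ) := fun m => {x | strictRank x m < k}
  have hA : ∀ m, MeasurableSet (A m) := fun m => measurableSet_strictRank_lt m k
  have hsymm : ∀ m', ν (A m') = ν (A m) := by
    intro m'
    have : (fun x => x ∘ Equiv.swap m' m) ⁻¹' A m = A m' := by
      ext x; simp [A, strictRank_comp_perm]
    rw [← this, (hexch _).measure_preimage (hA m).nullMeasurableSet]
  have hsum : ∑ m', ν (A m') = k := by
    calc ∑ m', ν (A m') = ∫⁻ x, ∑ m', (A m').indicator 1 x ∂ν := by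
          rw [lintegral_finsetSum _ fun m' _ => measurable_one.indicator (hA m')]
          simp only [lintegral_indicator_one (hA _)]
      _ = ∫⁻ _, (k : ℝ≥0∞) ∂ν := lintegral_congr_ae <| hinj.mono fun x hx => by
          simp [Set.indicator_apply, A, card_strictRank_lt hx hk]
      _ = k := by simp
  rw [ENNReal.eq_div_iff (Nat.cast_ne_zero.2 m.pos.ne') (ENNReal.natCast_ne_top n), ← hsum]
  simp only [hsymm, sum_const, card_univ, Fintype.card_fin, nsmul_eq_mul]
  rfl

theorem natCast_div_le_of_eq_ceil {k : ℕ} {a b : ℝ} (hb : 0 < b) (hk : (k : ℤ) = ⌈a * b⌉) :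
    k / b ≤ a + 1 / b := by
  have hk_lt : (k : ℝ) < a * b + 1 := by
    rw [show (k : ℝ) = ((k : ℤ) : ℝ) by simp, hk]
    exact Int.ceil_lt_add_one _
  calc (k : ℝ) / b ≤ (a * b + 1) / b := by gcongr
    _ = a + 1 / b := by field_simp

noncomputable def conformalThreshold {N : ℕ} (s : Fin N → ℝ) (k : ℕ) : EReal :=
  if h : 1 ≤ k ∧ k ≤ N then (kthSmallest s k h.1 h.2 : EReal) else ⊤

theorem coe_le_conformalThreshold_iff {N k : ℕ} (x : Fin (N + 1) → ℝ) (hk : 1 ≤ k)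
    (hkN : k ≤ N + 1) :
    (x (Fin.last N) : EReal) ≤ conformalThreshold (fun i => x i.castSucc) k ↔
      strictRank x (Fin.last N) < k := by
  rw [conformalThreshold, strictRank_last]
  split_ifs with h
  · rw [EReal.coe_le_coe_iff, le_kthSmallest_iff]
  · have : #{i : Fin N | x i.castSucc < x (Fin.last N)} ≤ N :=
      (card_le_univ _).trans_eq (Fintype.card_fin N)
    simp only [le_top, true_iff]
    omega

/-- **Calibration quantile lemma for split conformal prediction (upper bound).**
Let `S₁, …, S_{N+1}` be i.i.d. real-valued random variables whose common distribution
is atomless, `α ∈ (0,1)`, `k = ⌈(1-α)(N+1)⌉`, and let `Q` be the `k`-th smallest value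
among `S₁, …, S_N` when `k ≤ N`, and `Q = +∞` otherwise.  Then
`P[S_{N+1} ≤ Q] ≤ 1 - α + 1/(N+1)`. -/
theorem conformal_calibration_quantile_upper
    {Ω : Type*} [MeasurableSpace Ω] (ℙ : Measure Ω) [IsProbabilityMeasure ℙ]
    (N : ℕ)
    (S : Fin (N + 1) → Ω → ℝ)
    (hSmeas : ∀ i, Measurable (S i))
    (hindep : ProbabilityTheory.iIndepFun S ℙ)
    (hident : ∀ i j, ProbabilityTheory.IdentDistrib (S i) (S j) ℙ ℙ)
    (hatomless : ∀ (i : Fin (N + 1)) (x : ℝ), ℙ {ω | S i ω = x} = 0)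
    (α : ℝ) (hα : α ∈ Set.Ioo (0 : ℝ) 1)
    (k : ℕ) (hk : (k : ℤ) = ⌈(1 - α) * (N + 1)⌉)
    (Q : Ω → EReal)
    (hQ : ∀ ω, Q ω =
      if h : 1 ≤ k ∧ k ≤ N then
        ((kthSmallest (fun i : Fin N => S i.castSucc ω) k h.1 h.2 : ℝ) : EReal)
      else (⊤ : EReal)) :
    (ℙ {ω | ((S (Fin.last N) ω : ℝ) : EReal) ≤ Q ω}).toReal ≤ 1 - α + 1 / (N + 1) := by
  obtain ⟨hα0, hα1⟩ := hα
  have hk_pos : 1 ≤ k := by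
    have : (0 : ℤ) < ⌈(1 - α) * (N + 1)⌉ := Int.ceil_pos.2 (by nlinarith)
    omega
  have hk_le : k ≤ N + 1 := by
    have : ⌈(1 - α) * (N + 1)⌉ ≤ N + 1 := Int.ceil_le.2 (by push_cast; nlinarith)
    omega
  set J : Ω → Fin (N + 1) → ℝ := fun ω i => S i ω
  have hJ : Measurable J := measurable_pi_lambda _ hSmeas
  have := Measure.isProbabilityMeasure_map (μ := ℙ) (hSmeas 0).aemeasurable
  have : NullSingletonClass (ℙ.map (S 0)) := ⟨fun x => by
    rw [Measure.map_apply (hSmeas 0) (measurableSet_singleton x)]; exact hatomless 0 x⟩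
  have hevent : {ω | (S (Fin.last N) ω : EReal) ≤ Q ω} =
      J ⁻¹' {x | strictRank x (Fin.last N) < k} := by
    ext ω
    rw [Set.mem_ofPred_eq, hQ]
    exact coe_le_conformalThreshold_iff (J ω) hk_pos hk_le
  rw [hevent, ← Measure.map_apply hJ (measurableSet_strictRank_lt _ _),
    hindep.map_fun_eq_pi_of_identDistrib (fun i => (hSmeas i).aemeasurable) (hident · 0),
    measure_strictRank_lt_of_exchangeable _ (measurePreserving_comp_perm_pi _)
      (ProbabilityTheory.ae_injective_pi _) hk_le, ENNReal.toReal_div]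
  push_cast
  exact natCast_div_le_of_eq_ceil N.cast_add_one_pos hk
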